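/- Let p ≥ 1, let G be a graph in W_p, and let v be a non-isolated vertex of G. Then G − v belongs to W_p if and only if |N_G(v) − N_G(S)| ≥ p for every independent set S of the localization G_v. -/

import Mathlib

open Classical

noncomputable section

variable {V : Type*}

/-- `s` is an independent set of `G`. -/
def IndepSet (G : SimpleGraph V) (s : Set V) : Prop :=
  ∀ ⦃a⦄, a ∈ s → ∀ ⦃b⦄, b ∈ s → ¬ G.Adj a b

/-- The independence number `α(G)`. -/
def alphaNum [Fintype V] (G : SimpleGraph V) : ℕ :=
  sSup {n | ∃ s : Set V, IndepSet G s ∧ s.ncard = n}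

/-- `s` is a maximal independent set of `G`. -/
def MaximalIndep (G : SimpleGraph V) (s : Set V) : Prop :=
  IndepSet G s ∧ ∀ t : Set V, IndepSet G t → s ⊆ t → s = t

/-- `G` is well-covered: all maximal independent sets have cardinality `α(G)`. -/
def WellCovered [Fintype V] (G : SimpleGraph V) : Prop :=
  ∀ s : Set V, MaximalIndep G s → s.ncard = alphaNum G

/-- The open neighborhood `N_G(S)` of a set of vertices. -/
def openNbhd (G : SimpleGraph V) (S : Set V) : Set V :=
  {v | v ∉ S ∧ ∃ u ∈ S, G.Adj u v}

/-- The closed neighborhood `N_G[S]`. -/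
def closedNbhd (G : SimpleGraph V) (S : Set V) : Set V :=
  S ∪ openNbhd G S

/-- The vertex set of the localization `G_S = G - N_G[S]`. -/
def localSet (G : SimpleGraph V) (S : Set V) : Set V :=
  (closedNbhd G S)ᶜ

/-- `G` belongs to the class `W_p`. -/
def Wp (p : ℕ) [Fintype V] (G : SimpleGraph V) : Prop :=
  p ≤ Fintype.card V ∧
    ∀ A : Fin p → Set V,
      (∀ i, IndepSet G (A i)) →
      (∀ i j, i ≠ j → Disjoint (A i) (A j)) →
      ∃ S : Fin p → Set V,
        (∀ i j, i ≠ j → Disjoint (S i) (S j)) ∧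
        (∀ i, IndepSet G (S i) ∧ (S i).ncard = alphaNum G) ∧
        (∀ i, A i ⊆ S i)

/-- `G` is `α`-critical: deleting any edge increases the independence number. -/
def AlphaCritical [Fintype V] (G : SimpleGraph V) : Prop :=
  ∀ a b : V, G.Adj a b → alphaNum G < alphaNum (G.deleteEdges {s(a, b)})

/-- The vertex set of `G_{ab} = G - (N_G(a) ∪ N_G(b))`. -/
def edgeLocalSet (G : SimpleGraph V) (a b : V) : Set V :=
  (G.neighborSet a ∪ G.neighborSet b)ᶜ


/-!
Because `G ∈ W_p`, the independent set `{u}` for a neighbour `u` of `v` extends to a maximum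
independent set avoiding `v`, so `α(G - v) = α(G)`.

(⇒) If `D = N(v) \ N(S)` had fewer than `p` vertices, extend `S` together with the singletons
of `D` to disjoint maximum independent sets of `G - v`. The one containing `S` meets `N(v)`
neither in `N(S)` nor in `D`, so adding `v` to it gives an independent set of size `α(G) + 1`.

(⇐) Extend the given sets in `G`. If one of the extensions, `S_j`, contains `v`, put
`Q = S_j - v`. Two non-adjacent vertices of `N(v) \ N(Q)` would enlarge `Q` beyond `α(G)`, so
this set is a clique of at least `p` vertices; it misses `S_j` and meets every other `S_i` at
most once, so one of its vertices `d` lies in no `S_i`, and `S_j` may be replaced by `Q ∪ {d}`.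
-/

section

variable {G : SimpleGraph V}

theorem IndepSet.mono {s t : Set V} (ht : IndepSet G t) (h : s ⊆ t) : IndepSet G s :=
  fun _ ha _ hb => ht (h ha) (h hb)

theorem indepSet_of_subsingleton {s : Set V} (hs : s.Subsingleton) : IndepSet G s :=
  fun _ ha _ hb hadj => G.ne_of_adj hadj (hs ha hb)

theorem mem_localSet_iff {S : Set V} {x : V} :
    x ∈ localSet G S ↔ x ∉ S ∧ ∀ u ∈ S, ¬ G.Adj u x := by
  simp only [localSet, closedNbhd, openNbhd, Set.mem_compl_iff, Set.mem_union, Set.mem_ofPred_eq]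
  grind

theorem IndepSet.insert {s : Set V} {x : V} (hs : IndepSet G s) (hx : x ∈ localSet G s) :
    IndepSet G (insert x s) := by
  rw [mem_localSet_iff] at hx
  rintro a (rfl | ha) b (rfl | hb) hab
  · exact G.irrefl hab
  · exact hx.2 b hb hab.symm
  · exact hx.2 a ha hab
  · exact hs ha hb hab

theorem IndepSet.ncard_le_alphaNum [Fintype V] {s : Set V} (hs : IndepSet G s) :
    s.ncard ≤ alphaNum G :=
  le_csSup ⟨Nat.card V, by rintro _ ⟨t, -, rfl⟩; exact Set.ncard_le_card t⟩ ⟨s, hs, rfl⟩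

theorem isClique_of_subset_localSet [Fintype V] {Q D : Set V} (hQ : IndepSet G Q)
    (hα : alphaNum G ≤ Q.ncard + 1) (hD : D ⊆ localSet G Q) : G.IsClique D := by
  intro d hd d' hd' hne
  by_contra hnadj
  have hd'Q := mem_localSet_iff.mp (hD hd')
  have hdQ := mem_localSet_iff.mp (hD hd)
  have hdloc : d ∈ localSet G (insert d' Q) := by
    refine mem_localSet_iff.mpr ⟨?_, ?_⟩
    · rintro (h | h)
      exacts [hne h, hdQ.1 h]
    · rintro u (rfl | hu) hud
      exacts [hnadj hud.symm, hdQ.2 u hu hud]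
  have hcard := ((hQ.insert (hD hd')).insert hdloc).ncard_le_alphaNum
  rw [Set.ncard_insert_of_notMem (mem_localSet_iff.mp hdloc).1,
    Set.ncard_insert_of_notMem hd'Q.1] at hcard
  omega

theorem SimpleGraph.IsClique.exists_mem_forall_notMem_of_indepSet {p : ℕ} {D : Set V}
    (hD : G.IsClique D) {S : Fin p → Set V} (hS : ∀ i, IndepSet G (S i)) {j : Fin p}
    (hDj : Disjoint D (S j)) (hp : p ≤ D.ncard) : ∃ d ∈ D, ∀ i, d ∉ S i := by
  by_contra! hcover
  have : Nonempty (Fin p) := ⟨j⟩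
  choose! f hf using hcover
  have hmaps : ∀ d ∈ D, f d ∈ ({j}ᶜ : Set (Fin p)) := fun d hd hdj =>
    Set.disjoint_left.mp hDj hd (Set.mem_singleton_iff.mp hdj ▸ hf d hd)
  have hinj : Set.InjOn f D := fun d hd d' hd' hdd' => by
    by_contra hne
    exact hS (f d') (hdd' ▸ hf d hd) (hf d' hd') (hD hd hd' hne)
  have hle := Set.ncard_le_ncard_of_injOn f hmaps hinj
  rw [Set.ncard_compl, Set.ncard_singleton, Nat.card_eq_fintype_card, Fintype.card_fin] at hle
  have : 0 < p := j.pos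
  omega

theorem indepSet_induce_iff {W : Set V} {s : Set W} :
    IndepSet (G.induce W) s ↔ IndepSet G (Subtype.val '' s) := by
  constructor
  · rintro h _ ⟨a, ha, rfl⟩ _ ⟨b, hb, rfl⟩ hab
    exact h ha hb hab
  · intro h a ha b hb hab
    exact h ⟨a, ha, rfl⟩ ⟨b, hb, rfl⟩ hab

theorem alphaNum_induce_le [Fintype V] (W : Set V) [Fintype W] :
    alphaNum (G.induce W) ≤ alphaNum G :=
  csSup_le' <| by
    rintro _ ⟨s, hs, rfl⟩
    rw [← Set.ncard_image_of_injective s Subtype.val_injective]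
    exact (indepSet_induce_iff.mp hs).ncard_le_alphaNum

theorem wp_induce_of_extends {p : ℕ} {W : Set V} [Fintype W] (hcard : p ≤ W.ncard)
    (hext : ∀ A : Fin p → Set V, (∀ i, A i ⊆ W) → (∀ i, IndepSet G (A i)) →
      (∀ i j, i ≠ j → Disjoint (A i) (A j)) →
      ∃ S : Fin p → Set V, (∀ i j, i ≠ j → Disjoint (S i) (S j)) ∧
        (∀ i, S i ⊆ W ∧ IndepSet G (S i) ∧ (S i).ncard = alphaNum (G.induce W)) ∧
        ∀ i, A i ⊆ S i) :
    Wp p (G.induce W) := by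
  refine ⟨by rwa [← Nat.card_eq_fintype_card, Nat.card_coe_set_eq], fun A hA hAdisj => ?_⟩
  obtain ⟨S, hSdisj, hS, hAS⟩ := hext (fun i => Subtype.val '' A i)
    (fun i => Subtype.coe_image_subset W (A i)) (fun i => indepSet_induce_iff.mp (hA i))
    (fun i j hij => (Set.disjoint_image_iff Subtype.val_injective).mpr (hAdisj i j hij))
  have himage : ∀ i, Subtype.val '' (Subtype.val ⁻¹' S i : Set W) = S i := fun i => by
    rw [Subtype.image_preimage_coe, Set.inter_eq_right.mpr (hS i).1]
  refine ⟨fun i => Subtype.val ⁻¹' S i, fun i j hij => (hSdisj i j hij).preimage _,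
    fun i => ⟨?_, ?_⟩, fun i => Set.image_subset_iff.mp (hAS i)⟩
  · rw [indepSet_induce_iff, himage]
    exact (hS i).2.1
  · rw [← Set.ncard_image_of_injective _ Subtype.val_injective, himage]
    exact (hS i).2.2

theorem Wp.exists_maximum_superset_disjoint [Fintype V] {p : ℕ} (hG : Wp p G) {A D : Set V}
    (hA : IndepSet G A) (hAD : Disjoint A D) (hD : D.ncard < p) :
    ∃ T, A ⊆ T ∧ IndepSet G T ∧ T.ncard = alphaNum G ∧ Disjoint T D := by
  obtain ⟨q, rfl⟩ : ∃ q, p = q + 1 := Nat.exists_eq_add_one.mpr (by omega)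
  obtain ⟨e⟩ : Nonempty (D ↪ Fin q) := Function.Embedding.nonempty_of_card_le <| by
    rw [Fintype.card_fin, ← Nat.card_eq_fintype_card, Nat.card_coe_set_eq]
    omega
  let B : Fin (q + 1) → Set V := Fin.cons A fun k => Subtype.val '' (e ⁻¹' {k})
  have hfibre : ∀ k, (Subtype.val '' (e ⁻¹' {k}) : Set V).Subsingleton := by
    rintro k _ ⟨a, ha, rfl⟩ _ ⟨b, hb, rfl⟩
    exact congrArg Subtype.val (e.injective (ha.trans hb.symm))
  have hBind : ∀ i, IndepSet G (B i) := Fin.cases hA fun k => indepSet_of_subsingleton (hfibre k)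
  have hAfibre : ∀ k, Disjoint A (Subtype.val '' (e ⁻¹' {k})) := fun k =>
    hAD.mono_right (Subtype.coe_image_subset D _)
  have hBdisj : ∀ i j, i ≠ j → Disjoint (B i) (B j) := by
    intro i j hij
    cases i using Fin.cases <;> cases j using Fin.cases
    · exact absurd rfl hij
    · exact hAfibre _
    · exact (hAfibre _).symm
    · refine (Set.disjoint_image_iff Subtype.val_injective).mpr (.preimage _ ?_)
      exact Set.disjoint_singleton.mpr fun h => hij (congrArg Fin.succ h)
  obtain ⟨T, hTdisj, hT, hBT⟩ := hG.2 B hBind hBdisj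
  refine ⟨T 0, hBT 0, (hT 0).1, (hT 0).2, Set.disjoint_right.mpr fun d hd hd0 => ?_⟩
  have hdT : d ∈ T (e ⟨d, hd⟩).succ := hBT _ ⟨⟨d, hd⟩, rfl, rfl⟩
  exact Set.disjoint_left.mp (hTdisj 0 _ (Fin.succ_ne_zero _).symm) hd0 hdT

theorem Wp.alphaNum_induce_compl_singleton [Fintype V] {p : ℕ} (hG : Wp p G) (hp : 1 ≤ p)
    {v : V} (hv : ∃ u, G.Adj v u) : alphaNum (G.induce ({v}ᶜ : Set V)) = alphaNum G := by
  refine le_antisymm (alphaNum_induce_le _) ?_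
  obtain ⟨u, hvu⟩ := hv
  obtain ⟨T, huT, hT, hTcard, -⟩ := hG.exists_maximum_superset_disjoint
    (indepSet_of_subsingleton Set.subsingleton_singleton) (Set.disjoint_empty _)
    (by rw [Set.ncard_empty]; omega)
  have hTv : T ⊆ {v}ᶜ := fun x hx (hxv : x = v) => hT (hxv ▸ hx) (huT rfl) hvu
  have himage : Subtype.val '' (Subtype.val ⁻¹' T : Set ({v}ᶜ : Set V)) = T := by
    rw [Subtype.image_preimage_coe, Set.inter_eq_right.mpr hTv]
  have hle := (indepSet_induce_iff.mpr (himage ▸ hT)).ncard_le_alphaNum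
  rwa [← Set.ncard_image_of_injective _ Subtype.val_injective, himage, hTcard] at hle

theorem le_ncard_neighborSet_diff_openNbhd [Fintype V] {p : ℕ} {v : V}
    (hα : alphaNum G ≤ alphaNum (G.induce ({v}ᶜ : Set V)))
    (hH : Wp p (G.induce ({v}ᶜ : Set V))) {S : Set V} (hSv : S ⊆ localSet G {v})
    (hS : IndepSet G S) : p ≤ (G.neighborSet v \ openNbhd G S).ncard := by
  by_contra! hlt
  set D := G.neighborSet v \ openNbhd G S
  have hSv' : ∀ x ∈ S, x ≠ v ∧ ¬ G.Adj v x := fun x hx => by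
    simpa using mem_localSet_iff.mp (hSv hx)
  obtain ⟨T, hST, hT, hTcard, hTD⟩ := hH.exists_maximum_superset_disjoint
    (A := Subtype.val ⁻¹' S) (D := Subtype.val ⁻¹' D)
    (indepSet_induce_iff.mpr (hS.mono (Set.image_preimage_subset _ _)))
    (Set.disjoint_left.mpr fun x hxS hxD => (hSv' x hxS).2 hxD.1)
    (lt_of_le_of_lt (by
      rw [← Set.ncard_image_of_injective _ Subtype.val_injective]
      exact Set.ncard_le_ncard (Set.image_preimage_subset _ _)) hlt)
  set X := Subtype.val '' T
  have hX : IndepSet G X := indepSet_induce_iff.mp hT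
  have hSX : S ⊆ X := fun x hx => ⟨⟨x, (hSv' x hx).1⟩, hST hx, rfl⟩
  have hvX : v ∈ localSet G X := by
    refine mem_localSet_iff.mpr ⟨fun ⟨x, _, hxv⟩ => x.2 hxv, ?_⟩
    rintro _ ⟨w, hwT, rfl⟩ hwv
    have hwD : (w : V) ∈ D :=
      ⟨hwv.symm, fun ⟨_, u, huS, huw⟩ => hX (hSX huS) ⟨w, hwT, rfl⟩ huw⟩
    exact Set.disjoint_left.mp hTD hwT hwD
  have hle := (hX.insert hvX).ncard_le_alphaNum
  rw [Set.ncard_insert_of_notMem (mem_localSet_iff.mp hvX).1,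
    Set.ncard_image_of_injective _ Subtype.val_injective, hTcard] at hle
  omega

theorem exists_adj_forall_notMem_of_le_ncard [Fintype V] {p : ℕ} {S : Fin p → Set V}
    (hS : ∀ i, IndepSet G (S i) ∧ (S i).ncard = alphaNum G) {v : V} {j : Fin p}
    (hvj : v ∈ S j) (hp : p ≤ (G.neighborSet v \ openNbhd G (S j \ {v})).ncard) :
    ∃ d, G.Adj v d ∧ (∀ i, d ∉ S i) ∧ d ∈ localSet G (S j \ {v}) := by
  set D := G.neighborSet v \ openNbhd G (S j \ {v})
  have hQ : IndepSet G (S j \ {v}) := (hS j).1.mono Set.sdiff_subset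
  have hQcard : (S j \ {v}).ncard + 1 = alphaNum G := by
    rw [Set.ncard_sdiff_singleton_add_one hvj, (hS j).2]
  have hDj : ∀ d ∈ D, d ∉ S j := fun d hd hdj => (hS j).1 hvj hdj hd.1
  have hDloc : D ⊆ localSet G (S j \ {v}) := fun d hd =>
    mem_localSet_iff.mpr ⟨fun h => hDj d hd h.1,
      fun u hu hud => hd.2 ⟨fun h => hDj d hd h.1, u, hu, hud⟩⟩
  obtain ⟨d, hd, hdS⟩ := (isClique_of_subset_localSet hQ hQcard.ge hDloc)
    |>.exists_mem_forall_notMem_of_indepSet (fun i => (hS i).1)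
      (Set.disjoint_left.mpr hDj) hp
  exact ⟨d, hd.1, hdS, hDloc hd⟩

theorem exists_family_exchange [Fintype V] {p : ℕ} {S : Fin p → Set V}
    (hSdisj : ∀ i j, i ≠ j → Disjoint (S i) (S j))
    (hS : ∀ i, IndepSet G (S i) ∧ (S i).ncard = alphaNum G) {v d : V} {j : Fin p}
    (hvj : v ∈ S j) (hvd : G.Adj v d) (hdS : ∀ i, d ∉ S i)
    (hdQ : d ∈ localSet G (S j \ {v})) :
    ∃ T : Fin p → Set V, (∀ i k, i ≠ k → Disjoint (T i) (T k)) ∧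
      (∀ i, T i ⊆ {v}ᶜ ∧ IndepSet G (T i) ∧ (T i).ncard = alphaNum G) ∧
      ∀ i, S i \ {v} ⊆ T i := by
  have hvS : ∀ i, i ≠ j → v ∉ S i := fun i hij hvi =>
    Set.disjoint_left.mp (hSdisj i j hij) hvi hvj
  have hjdisj : ∀ k, k ≠ j → Disjoint (insert d (S j \ {v})) (S k) := fun k hkj =>
    Set.disjoint_insert_left.mpr ⟨hdS k, (hSdisj j k hkj.symm).mono_left Set.sdiff_subset⟩
  refine ⟨Function.update S j (insert d (S j \ {v})), fun i k hik => ?_, fun i => ?_,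
    fun i => ?_⟩
  · rcases eq_or_ne i j with rfl | hij
    · simpa [Function.update_of_ne hik.symm] using hjdisj k hik.symm
    rcases eq_or_ne k j with rfl | hkj
    · simpa [Function.update_of_ne hij] using (hjdisj i hij).symm
    · simpa [Function.update_of_ne hij, Function.update_of_ne hkj] using hSdisj i k hik
  · rcases eq_or_ne i j with rfl | hij
    · rw [Function.update_self]
      refine ⟨?_, ((hS i).1.mono Set.sdiff_subset).insert hdQ, ?_⟩
      · rintro x (rfl | ⟨-, hxv⟩)
        exacts [hvd.ne.symm, hxv]
      · rw [Set.ncard_insert_of_notMem (mem_localSet_iff.mp hdQ).1,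
          Set.ncard_sdiff_singleton_add_one hvj, (hS i).2]
    · rw [Function.update_of_ne hij]
      exact ⟨fun x hx (hxv : x = v) => hvS i hij (hxv ▸ hx), hS i⟩
  · rcases eq_or_ne i j with rfl | hij
    · rw [Function.update_self]
      exact Set.subset_insert _ _
    · rw [Function.update_of_ne hij]
      exact Set.sdiff_subset

theorem exists_maximum_family_avoiding [Fintype V] {p : ℕ} (hG : Wp p G) {v : V}
    (hR : ∀ S : Set V, S ⊆ localSet G {v} → IndepSet G S →
      p ≤ (G.neighborSet v \ openNbhd G S).ncard)
    (A : Fin p → Set V) (hAv : ∀ i, A i ⊆ {v}ᶜ) (hA : ∀ i, IndepSet G (A i))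
    (hAdisj : ∀ i j, i ≠ j → Disjoint (A i) (A j)) :
    ∃ T : Fin p → Set V, (∀ i j, i ≠ j → Disjoint (T i) (T j)) ∧
      (∀ i, T i ⊆ {v}ᶜ ∧ IndepSet G (T i) ∧ (T i).ncard = alphaNum G) ∧
      ∀ i, A i ⊆ T i := by
  obtain ⟨S, hSdisj, hS, hAS⟩ := hG.2 A hA hAdisj
  by_cases hvS : ∃ j, v ∈ S j
  · obtain ⟨j, hvj⟩ := hvS
    have hQv : S j \ {v} ⊆ localSet G {v} := fun x ⟨hx, hxv⟩ =>
      mem_localSet_iff.mpr ⟨hxv, fun u (hu : u = v) hux => (hS j).1 hvj hx (hu ▸ hux)⟩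
    obtain ⟨d, hvd, hdS, hdQ⟩ := exists_adj_forall_notMem_of_le_ncard hS hvj
      (hR _ hQv ((hS j).1.mono Set.sdiff_subset))
    obtain ⟨T, hTdisj, hT, hST⟩ := exists_family_exchange hSdisj hS hvj hvd hdS hdQ
    exact ⟨T, hTdisj, hT, fun i x hx => hST i ⟨hAS i hx, hAv i hx⟩⟩
  · push Not at hvS
    exact ⟨S, hSdisj, fun i => ⟨fun x hx (hxv : x = v) => hvS i (hxv ▸ hx), hS i⟩, hAS⟩

end

theorem stmt18 [Fintype V] (G : SimpleGraph V) (p : ℕ) (hp : 1 ≤ p)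
    (hG : Wp p G) (v : V) (hv : ∃ u, G.Adj v u) :
    Wp p (G.induce ({v}ᶜ : Set V)) ↔
      ∀ S : Set V, S ⊆ localSet G {v} → IndepSet G S →
        p ≤ (G.neighborSet v \ openNbhd G S).ncard := by
  have hα := hG.alphaNum_induce_compl_singleton hp hv
  refine ⟨fun hH S hSv hS => le_ncard_neighborSet_diff_openNbhd hα.ge hH hSv hS, fun hR => ?_⟩
  have hNv : p ≤ (G.neighborSet v).ncard := by
    simpa [openNbhd] using
      hR ∅ (Set.empty_subset _) (indepSet_of_subsingleton Set.subsingleton_empty)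
  refine wp_induce_of_extends (hNv.trans (Set.ncard_le_ncard (G.neighborSet_subset_compl v))) ?_
  rw [hα]
  exact exists_maximum_family_avoiding hG hR
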